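/- In the cut-free calculus GwIKt†, the left diamond rule is height-preserving invertible: for all n ≥ 1, if Γ[◇α] ⇒ β is derivable with height n, then Γ[∘α] ⇒ β is derivable with height at most n. -/

import Mathlib

/-- Formulas of weak intuitionistic tense logic. -/
inductive Fml : Type
  | var : ℕ → Fml
  | top : Fml
  | bot : Fml
  | imp : Fml → Fml → Fml
  | and : Fml → Fml → Fml
  | or  : Fml → Fml → Fml
  | dia : Fml → Fml   -- ◇ (future diamond)
  | box : Fml → Fml   -- □ (future box)
  | bdia : Fml → Fml  -- ◆ (past diamond)
  | bbox : Fml → Fml  -- ■ (past box)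

/-- Atomic formulas: variables, ⊤, ⊥. -/
def Fml.Atomic : Fml → Prop
  | .var _ => True
  | .top => True
  | .bot => True
  | _ => False

/-- Formula structures: formulas closed under comma, ∘, •. -/
inductive FS : Type
  | fml : Fml → FS
  | comma : FS → FS → FS
  | circ : FS → FS    -- ∘, structural ◇
  | bullet : FS → FS  -- •, structural ◆

/-- Single-hole contexts. -/
inductive Ctx : Type
  | hole : Ctx
  | commaL : Ctx → FS → Ctx
  | commaR : FS → Ctx → Ctx
  | circ : Ctx → Ctx
  | bullet : Ctx → Ctx

/-- Fill the hole of a context with a structure. -/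
def Ctx.plug : Ctx → FS → FS
  | .hole, Δ => Δ
  | .commaL C Γ, Δ => .comma (C.plug Δ) Γ
  | .commaR Γ C, Δ => .comma Γ (C.plug Δ)
  | .circ C, Δ => .circ (C.plug Δ)
  | .bullet C, Δ => .bullet (C.plug Δ)

/-- Multi-hole contexts (for the mix rules Γ[·]ⁿ). -/
inductive MCtx : Type
  | hole : MCtx
  | fml : Fml → MCtx
  | comma : MCtx → MCtx → MCtx
  | circ : MCtx → MCtx
  | bullet : MCtx → MCtx

/-- Fill all holes of a multi-context with the same structure. -/
def MCtx.plug : MCtx → FS → FS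
  | .hole, Δ => Δ
  | .fml α, _ => .fml α
  | .comma C D, Δ => .comma (C.plug Δ) (D.plug Δ)
  | .circ C, Δ => .circ (C.plug Δ)
  | .bullet C, Δ => .bullet (C.plug Δ)

/-- Number n of designated occurrences in Γ[·]ⁿ. -/
def MCtx.holes : MCtx → ℕ
  | .hole => 1
  | .fml _ => 0
  | .comma C D => C.holes + D.holes
  | .circ C => C.holes
  | .bullet C => C.holes

/-- Cut formulas allowed in (Cut_*): not atomic, not □- or ■-formulas, not implications. -/
def Fml.Starish (α : Fml) : Prop :=
  ¬ α.Atomic ∧ (∀ a, α ≠ .box a) ∧ (∀ a, α ≠ .bbox a) ∧ (∀ a b, α ≠ .imp a b)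

/-- Flags selecting the variant of the calculus:
`idFull`: unrestricted identity axiom (Id) vs atomic (Id_A);
`conF`: full formula contraction (Con_F) vs the restricted contractions
(Con_A), (Con_□), (Con_■), (Con_→);
`cut`: the single cut rule (Cut);
`mix`: the four cut-like rules (Mix_A), (Mix_□), (Mix_■), (Mix_→), (Cut_*). -/
structure Rules where
  idFull : Bool
  conF : Bool
  cut : Bool
  mix : Bool

/-- `DerH R n Γ β`: the sequent Γ ⇒ β has a derivation of height at most `n`
in the calculus determined by `R`. -/
inductive DerH (R : Rules) : ℕ → FS → Fml → Prop
  -- (Id_A)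
  | idA (n : ℕ) (α : Fml) : 1 ≤ n → α.Atomic → DerH R n (.fml α) α
  -- (Id), only in calculi with unrestricted identity
  | idF (n : ℕ) (α : Fml) : R.idFull = true → 1 ≤ n → DerH R n (.fml α) α
  -- (⊤)
  | topL (n : ℕ) (Γ : Ctx) (Δ : FS) (β : Fml) :
      DerH R n (Γ.plug (.fml .top)) β → DerH R (n + 1) (Γ.plug Δ) β
  -- (⊥)
  | botL (n : ℕ) (Γ : Ctx) (Δ : FS) (β : Fml) :
      DerH R n Δ .bot → DerH R (n + 1) (Γ.plug Δ) β
  -- (∧L)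
  | andL (n : ℕ) (Γ : Ctx) (α₁ α₂ β : Fml) :
      DerH R n (Γ.plug (.comma (.fml α₁) (.fml α₂))) β →
      DerH R (n + 1) (Γ.plug (.fml (α₁.and α₂))) β
  -- (∧R)
  | andR (n : ℕ) (Γ : FS) (β₁ β₂ : Fml) :
      DerH R n Γ β₁ → DerH R n Γ β₂ → DerH R (n + 1) Γ (β₁.and β₂)
  -- (∨L)
  | orL (n : ℕ) (Γ : Ctx) (α₁ α₂ β : Fml) :
      DerH R n (Γ.plug (.fml α₁)) β → DerH R n (Γ.plug (.fml α₂)) β →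
      DerH R (n + 1) (Γ.plug (.fml (α₁.or α₂))) β
  -- (∨R), i = 1
  | orR₁ (n : ℕ) (Γ : FS) (β₁ β₂ : Fml) :
      DerH R n Γ β₁ → DerH R (n + 1) Γ (β₁.or β₂)
  -- (∨R), i = 2
  | orR₂ (n : ℕ) (Γ : FS) (β₁ β₂ : Fml) :
      DerH R n Γ β₂ → DerH R (n + 1) Γ (β₁.or β₂)
  -- (→L)
  | impL (n : ℕ) (Γ : Ctx) (Δ : FS) (α₁ α₂ β : Fml) :
      DerH R n Δ α₁ → DerH R n (Γ.plug (.fml α₂)) β →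
      DerH R (n + 1) (Γ.plug (.comma Δ (.fml (α₁.imp α₂)))) β
  -- (→R)
  | impR (n : ℕ) (Γ : FS) (β₁ β₂ : Fml) :
      DerH R n (.comma (.fml β₁) Γ) β₂ → DerH R (n + 1) Γ (β₁.imp β₂)
  -- (◇L)
  | diaL (n : ℕ) (Γ : Ctx) (α β : Fml) :
      DerH R n (Γ.plug (.circ (.fml α))) β → DerH R (n + 1) (Γ.plug (.fml (α.dia))) β
  -- (◇R)
  | diaR (n : ℕ) (Γ : FS) (β : Fml) :
      DerH R n Γ β → DerH R (n + 1) (.circ Γ) (β.dia)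
  -- (◆L)
  | bdiaL (n : ℕ) (Γ : Ctx) (α β : Fml) :
      DerH R n (Γ.plug (.bullet (.fml α))) β → DerH R (n + 1) (Γ.plug (.fml (α.bdia))) β
  -- (◆R)
  | bdiaR (n : ℕ) (Γ : FS) (β : Fml) :
      DerH R n Γ β → DerH R (n + 1) (.bullet Γ) (β.bdia)
  -- (■L)
  | bboxL (n : ℕ) (Γ : Ctx) (α β : Fml) :
      DerH R n (Γ.plug (.fml α)) β → DerH R (n + 1) (Γ.plug (.circ (.fml (α.bbox)))) β
  -- (■R)
  | bboxR (n : ℕ) (Γ : FS) (β : Fml) :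
      DerH R n (.circ Γ) β → DerH R (n + 1) Γ (β.bbox)
  -- (□L)
  | boxL (n : ℕ) (Γ : Ctx) (α β : Fml) :
      DerH R n (Γ.plug (.fml α)) β → DerH R (n + 1) (Γ.plug (.bullet (.fml (α.box)))) β
  -- (□R)
  | boxR (n : ℕ) (Γ : FS) (β : Fml) :
      DerH R n (.bullet Γ) β → DerH R (n + 1) Γ (β.box)
  -- (Con∘)
  | conCirc (n : ℕ) (Γ : Ctx) (Δ₁ Δ₂ : FS) (β : Fml) :
      DerH R n (Γ.plug (.comma (.circ Δ₁) (.circ Δ₂))) β →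
      DerH R (n + 1) (Γ.plug (.circ (.comma Δ₁ Δ₂))) β
  -- (Con•)
  | conBullet (n : ℕ) (Γ : Ctx) (Δ₁ Δ₂ : FS) (β : Fml) :
      DerH R n (Γ.plug (.comma (.bullet Δ₁) (.bullet Δ₂))) β →
      DerH R (n + 1) (Γ.plug (.bullet (.comma Δ₁ Δ₂))) β
  -- (Con_F), only with full contraction
  | conF (n : ℕ) (Γ : Ctx) (α β : Fml) : R.conF = true →
      DerH R n (Γ.plug (.comma (.fml α) (.fml α))) β →
      DerH R (n + 1) (Γ.plug (.fml α)) β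
  -- (Con_A), only in the restricted calculi
  | conA (n : ℕ) (Γ : Ctx) (α β : Fml) : R.conF = false → α.Atomic →
      DerH R n (Γ.plug (.comma (.fml α) (.fml α))) β →
      DerH R (n + 1) (Γ.plug (.fml α)) β
  -- (Con_□)
  | conBox (n : ℕ) (Γ : Ctx) (α β : Fml) : R.conF = false →
      DerH R n (Γ.plug (.comma (.fml α.box) (.fml α.box))) β →
      DerH R (n + 1) (Γ.plug (.fml α.box)) β
  -- (Con_■)
  | conBBox (n : ℕ) (Γ : Ctx) (α β : Fml) : R.conF = false →
      DerH R n (Γ.plug (.comma (.fml α.bbox) (.fml α.bbox))) β →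
      DerH R (n + 1) (Γ.plug (.fml α.bbox)) β
  -- (Con_→)
  | conImp (n : ℕ) (Γ : Ctx) (α₁ α₂ β : Fml) : R.conF = false →
      DerH R n (Γ.plug (.comma (.fml (α₁.imp α₂)) (.fml (α₁.imp α₂)))) β →
      DerH R (n + 1) (Γ.plug (.fml (α₁.imp α₂))) β
  -- (Wk), i = 1
  | wk₁ (n : ℕ) (Γ : Ctx) (Δ₁ Δ₂ : FS) (β : Fml) :
      DerH R n (Γ.plug Δ₁) β → DerH R (n + 1) (Γ.plug (.comma Δ₁ Δ₂)) β
  -- (Wk), i = 2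
  | wk₂ (n : ℕ) (Γ : Ctx) (Δ₁ Δ₂ : FS) (β : Fml) :
      DerH R n (Γ.plug Δ₂) β → DerH R (n + 1) (Γ.plug (.comma Δ₁ Δ₂)) β
  -- (Ex)
  | ex (n : ℕ) (Γ : Ctx) (Δ₁ Δ₂ : FS) (β : Fml) :
      DerH R n (Γ.plug (.comma Δ₁ Δ₂)) β → DerH R (n + 1) (Γ.plug (.comma Δ₂ Δ₁)) β
  -- (Dual∘•)
  | dualCB (n : ℕ) (Γ : Ctx) (Δ₁ Δ₂ : FS) (β : Fml) :
      DerH R n (.comma (.circ Δ₁) Δ₂) .bot →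
      DerH R (n + 1) (Γ.plug (.comma Δ₁ (.bullet Δ₂))) β
  -- (Dual•∘)
  | dualBC (n : ℕ) (Γ : Ctx) (Δ₁ Δ₂ : FS) (β : Fml) :
      DerH R n (.comma (.bullet Δ₁) Δ₂) .bot →
      DerH R (n + 1) (Γ.plug (.comma Δ₁ (.circ Δ₂))) β
  -- (Cut)
  | cut (n : ℕ) (Γ : Ctx) (Δ : FS) (α β : Fml) : R.cut = true →
      DerH R n Δ α → DerH R n (Γ.plug (.fml α)) β → DerH R (n + 1) (Γ.plug Δ) β
  -- (Mix_A)
  | mixA (n : ℕ) (Γ : MCtx) (Δ : FS) (α β : Fml) : R.mix = true →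
      α.Atomic → 1 ≤ Γ.holes →
      DerH R n Δ α → DerH R n (Γ.plug (.fml α)) β → DerH R (n + 1) (Γ.plug Δ) β
  -- (Mix_□)
  | mixBox (n : ℕ) (Γ : MCtx) (Δ : FS) (α β : Fml) : R.mix = true →
      1 ≤ Γ.holes →
      DerH R n Δ α.box → DerH R n (Γ.plug (.fml α.box)) β → DerH R (n + 1) (Γ.plug Δ) β
  -- (Mix_■)
  | mixBBox (n : ℕ) (Γ : MCtx) (Δ : FS) (α β : Fml) : R.mix = true →
      1 ≤ Γ.holes →
      DerH R n Δ α.bbox → DerH R n (Γ.plug (.fml α.bbox)) β → DerH R (n + 1) (Γ.plug Δ) β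
  -- (Mix_→)
  | mixImp (n : ℕ) (Γ : MCtx) (Δ : FS) (α₁ α₂ β : Fml) : R.mix = true →
      1 ≤ Γ.holes →
      DerH R n Δ (α₁.imp α₂) → DerH R n (Γ.plug (.fml (α₁.imp α₂))) β →
      DerH R (n + 1) (Γ.plug Δ) β
  -- (Cut_*)
  | cutStar (n : ℕ) (Γ : Ctx) (Δ : FS) (α β : Fml) : R.mix = true →
      α.Starish →
      DerH R n Δ α → DerH R n (Γ.plug (.fml α)) β → DerH R (n + 1) (Γ.plug Δ) β

/-- Derivability (some height). -/
def Der (R : Rules) (Γ : FS) (β : Fml) : Prop := ∃ n, DerH R n Γ β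

/-- GwIKt: full identity, full contraction, with cut. -/
def GwIKt : Rules := ⟨true, true, true, false⟩
/-- GwIKt without the cut rule. -/
def GwIKtCF : Rules := ⟨true, true, false, false⟩
/-- GwIKt† : atomic identity, restricted contractions, with cut. -/
def GwIKtD : Rules := ⟨false, false, true, false⟩
/-- cut-free GwIKt†. -/
def GwIKtDCF : Rules := ⟨false, false, false, false⟩
/-- GwIKt‡ : cut replaced by the four cut-like rules. -/
def GwIKtDD : Rules := ⟨false, false, false, true⟩

/-! Replacing occurrences of `◇α` by `∘α` commutes with every rule of the calculus except
the unrestricted identity axiom, full contraction and the multi-hole mix rules; at a (◇L)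
step whose principal formula gets replaced, the premise itself is the derivation sought, one
step lower. Hence the replacement preserves derivability at each height, and the inversion of
(◇L) is the special case of replacing the single occurrence in `Γ[◇α]`. -/

theorem DerH.succ {R : Rules} {n : ℕ} {Δ : FS} {β : Fml} (h : DerH R n Δ β) :
    DerH R (n + 1) Δ β := by
  induction h with
  | idA n α _ hα => exact .idA _ _ (by omega) hα
  | idF n α hf _ => exact .idF _ _ hf (by omega)
  | topL n Γ Δ β _ ih => exact .topL _ Γ Δ β ih
  | botL n Γ Δ β _ ih => exact .botL _ Γ Δ β ih
  | andL n Γ α₁ α₂ β _ ih => exact .andL _ Γ α₁ α₂ β ih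
  | andR n Γ β₁ β₂ _ _ ih₁ ih₂ => exact .andR _ Γ β₁ β₂ ih₁ ih₂
  | orL n Γ α₁ α₂ β _ _ ih₁ ih₂ => exact .orL _ Γ α₁ α₂ β ih₁ ih₂
  | orR₁ n Γ β₁ β₂ _ ih => exact .orR₁ _ Γ β₁ β₂ ih
  | orR₂ n Γ β₁ β₂ _ ih => exact .orR₂ _ Γ β₁ β₂ ih
  | impL n Γ Δ α₁ α₂ β _ _ ih₁ ih₂ => exact .impL _ Γ Δ α₁ α₂ β ih₁ ih₂
  | impR n Γ β₁ β₂ _ ih => exact .impR _ Γ β₁ β₂ ih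
  | diaL n Γ α β _ ih => exact .diaL _ Γ α β ih
  | diaR n Γ β _ ih => exact .diaR _ Γ β ih
  | bdiaL n Γ α β _ ih => exact .bdiaL _ Γ α β ih
  | bdiaR n Γ β _ ih => exact .bdiaR _ Γ β ih
  | bboxL n Γ α β _ ih => exact .bboxL _ Γ α β ih
  | bboxR n Γ β _ ih => exact .bboxR _ Γ β ih
  | boxL n Γ α β _ ih => exact .boxL _ Γ α β ih
  | boxR n Γ β _ ih => exact .boxR _ Γ β ih
  | conCirc n Γ Δ₁ Δ₂ β _ ih => exact .conCirc _ Γ Δ₁ Δ₂ β ih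
  | conBullet n Γ Δ₁ Δ₂ β _ ih => exact .conBullet _ Γ Δ₁ Δ₂ β ih
  | conF n Γ α β hf _ ih => exact .conF _ Γ α β hf ih
  | conA n Γ α β hf ha _ ih => exact .conA _ Γ α β hf ha ih
  | conBox n Γ α β hf _ ih => exact .conBox _ Γ α β hf ih
  | conBBox n Γ α β hf _ ih => exact .conBBox _ Γ α β hf ih
  | conImp n Γ α₁ α₂ β hf _ ih => exact .conImp _ Γ α₁ α₂ β hf ih
  | wk₁ n Γ Δ₁ Δ₂ β _ ih => exact .wk₁ _ Γ Δ₁ Δ₂ β ih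
  | wk₂ n Γ Δ₁ Δ₂ β _ ih => exact .wk₂ _ Γ Δ₁ Δ₂ β ih
  | ex n Γ Δ₁ Δ₂ β _ ih => exact .ex _ Γ Δ₁ Δ₂ β ih
  | dualCB n Γ Δ₁ Δ₂ β _ ih => exact .dualCB _ Γ Δ₁ Δ₂ β ih
  | dualBC n Γ Δ₁ Δ₂ β _ ih => exact .dualBC _ Γ Δ₁ Δ₂ β ih
  | cut n Γ Δ α β hc _ _ ih₁ ih₂ => exact .cut _ Γ Δ α β hc ih₁ ih₂
  | mixA n Γ Δ α β hm ha hh _ _ ih₁ ih₂ => exact .mixA _ Γ Δ α β hm ha hh ih₁ ih₂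
  | mixBox n Γ Δ α β hm hh _ _ ih₁ ih₂ => exact .mixBox _ Γ Δ α β hm hh ih₁ ih₂
  | mixBBox n Γ Δ α β hm hh _ _ ih₁ ih₂ => exact .mixBBox _ Γ Δ α β hm hh ih₁ ih₂
  | mixImp n Γ Δ α₁ α₂ β hm hh _ _ ih₁ ih₂ => exact .mixImp _ Γ Δ α₁ α₂ β hm hh ih₁ ih₂
  | cutStar n Γ Δ α β hm hs _ _ ih₁ ih₂ => exact .cutStar _ Γ Δ α β hm hs ih₁ ih₂

inductive DiaRepl (α : Fml) : FS → FS → Prop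
  | refl (Δ : FS) : DiaRepl α Δ Δ
  | dia : DiaRepl α (.fml α.dia) (.circ (.fml α))
  | comma {Δ₁ Δ₁' Δ₂ Δ₂'} : DiaRepl α Δ₁ Δ₁' → DiaRepl α Δ₂ Δ₂' →
      DiaRepl α (.comma Δ₁ Δ₂) (.comma Δ₁' Δ₂')
  | circ {Δ Δ'} : DiaRepl α Δ Δ' → DiaRepl α (.circ Δ) (.circ Δ')
  | bullet {Δ Δ'} : DiaRepl α Δ Δ' → DiaRepl α (.bullet Δ) (.bullet Δ')

inductive DiaReplCtx (α : Fml) : Ctx → Ctx → Prop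
  | hole : DiaReplCtx α .hole .hole
  | commaL {C D Δ Δ'} : DiaReplCtx α C D → DiaRepl α Δ Δ' →
      DiaReplCtx α (.commaL C Δ) (.commaL D Δ')
  | commaR {C D Δ Δ'} : DiaRepl α Δ Δ' → DiaReplCtx α C D →
      DiaReplCtx α (.commaR Δ C) (.commaR Δ' D)
  | circ {C D} : DiaReplCtx α C D → DiaReplCtx α (.circ C) (.circ D)
  | bullet {C D} : DiaReplCtx α C D → DiaReplCtx α (.bullet C) (.bullet D)

namespace DiaRepl

variable {α : Fml}

theorem fml_inv {φ : Fml} {Θ : FS} (h : DiaRepl α (.fml φ) Θ) :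
    Θ = .fml φ ∨ φ = α.dia ∧ Θ = .circ (.fml α) := by
  cases h with
  | refl => exact .inl rfl
  | dia => exact .inr ⟨rfl, rfl⟩

theorem eq_of_fml {φ : Fml} {Θ : FS} (h : DiaRepl α (.fml φ) Θ) (hφ : φ ≠ α.dia) :
    Θ = .fml φ :=
  h.fml_inv.resolve_right fun h' => hφ h'.1

theorem comma_inv {Δ₁ Δ₂ Θ : FS} (h : DiaRepl α (.comma Δ₁ Δ₂) Θ) :
    ∃ Θ₁ Θ₂, Θ = .comma Θ₁ Θ₂ ∧ DiaRepl α Δ₁ Θ₁ ∧ DiaRepl α Δ₂ Θ₂ := by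
  cases h with
  | refl => exact ⟨Δ₁, Δ₂, rfl, .refl _, .refl _⟩
  | comma h₁ h₂ => exact ⟨_, _, rfl, h₁, h₂⟩

theorem circ_inv {Δ Θ : FS} (h : DiaRepl α (.circ Δ) Θ) :
    ∃ Θ', Θ = .circ Θ' ∧ DiaRepl α Δ Θ' := by
  cases h with
  | refl => exact ⟨Δ, rfl, .refl _⟩
  | circ h => exact ⟨_, rfl, h⟩

theorem bullet_inv {Δ Θ : FS} (h : DiaRepl α (.bullet Δ) Θ) :
    ∃ Θ', Θ = .bullet Θ' ∧ DiaRepl α Δ Θ' := by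
  cases h with
  | refl => exact ⟨Δ, rfl, .refl _⟩
  | bullet h => exact ⟨_, rfl, h⟩

theorem plug_inv {C : Ctx} {X Θ : FS} (h : DiaRepl α (C.plug X) Θ) :
    ∃ D Y, Θ = D.plug Y ∧ DiaReplCtx α C D ∧ DiaRepl α X Y := by
  induction C generalizing Θ with
  | hole => exact ⟨.hole, Θ, rfl, .hole, h⟩
  | commaL C Δ ih =>
    obtain ⟨Θ₁, Θ₂, rfl, h₁, h₂⟩ := h.comma_inv
    obtain ⟨D, Y, rfl, hC, hX⟩ := ih h₁
    exact ⟨.commaL D Θ₂, Y, rfl, .commaL hC h₂, hX⟩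
  | commaR Δ C ih =>
    obtain ⟨Θ₁, Θ₂, rfl, h₁, h₂⟩ := h.comma_inv
    obtain ⟨D, Y, rfl, hC, hX⟩ := ih h₂
    exact ⟨.commaR Θ₁ D, Y, rfl, .commaR h₁ hC, hX⟩
  | circ C ih =>
    obtain ⟨Θ', rfl, h'⟩ := h.circ_inv
    obtain ⟨D, Y, rfl, hC, hX⟩ := ih h'
    exact ⟨.circ D, Y, rfl, .circ hC, hX⟩
  | bullet C ih =>
    obtain ⟨Θ', rfl, h'⟩ := h.bullet_inv
    obtain ⟨D, Y, rfl, hC, hX⟩ := ih h'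
    exact ⟨.bullet D, Y, rfl, .bullet hC, hX⟩

theorem plug_fml_inv {C : Ctx} {φ : Fml} {Θ : FS} (h : DiaRepl α (C.plug (.fml φ)) Θ)
    (hφ : φ ≠ α.dia) : ∃ D, Θ = D.plug (.fml φ) ∧ DiaReplCtx α C D := by
  obtain ⟨D, Y, rfl, hC, hY⟩ := h.plug_inv
  exact ⟨D, by rw [hY.eq_of_fml hφ], hC⟩

end DiaRepl

namespace DiaReplCtx

variable {α : Fml}

theorem refl : ∀ C : Ctx, DiaReplCtx α C C
  | .hole => .hole
  | .commaL C Δ => .commaL (refl C) (.refl Δ)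
  | .commaR Δ C => .commaR (.refl Δ) (refl C)
  | .circ C => .circ (refl C)
  | .bullet C => .bullet (refl C)

theorem plug {C D : Ctx} {X Y : FS} (hC : DiaReplCtx α C D) (hX : DiaRepl α X Y) :
    DiaRepl α (C.plug X) (D.plug Y) := by
  induction hC with
  | hole => exact hX
  | commaL _ h ih => exact .comma ih h
  | commaR h _ ih => exact .comma h ih
  | circ _ ih => exact .circ ih
  | bullet _ ih => exact .bullet ih

end DiaReplCtx

theorem DerH.of_diaRepl {R : Rules} (hId : R.idFull = false) (hCon : R.conF = false)
    (hMix : R.mix = false) {α : Fml} {n : ℕ} {Δ Θ : FS} {β : Fml} (h : DerH R n Δ β)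
    (hr : DiaRepl α Δ Θ) : DerH R n Θ β := by
  have ne_dia {φ : Fml} (hφ : φ.Atomic) : φ ≠ α.dia := by rintro rfl; exact hφ
  induction h generalizing Θ with
  | idA n φ h1 hφ =>
    obtain rfl := hr.eq_of_fml (ne_dia hφ)
    exact .idA n φ h1 hφ
  | idF => simp_all
  | topL n Γ Δ β _ ih =>
    obtain ⟨D, Y, rfl, hC, -⟩ := hr.plug_inv
    exact .topL n D Y β (ih (hC.plug (.refl _)))
  | botL n Γ Δ β _ ih =>
    obtain ⟨D, Y, rfl, -, hY⟩ := hr.plug_inv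
    exact .botL n D Y β (ih hY)
  | andL n Γ α₁ α₂ β _ ih =>
    obtain ⟨D, rfl, hC⟩ := hr.plug_fml_inv (by simp)
    exact .andL n D α₁ α₂ β (ih (hC.plug (.refl _)))
  | andR n Γ β₁ β₂ _ _ ih₁ ih₂ => exact .andR n Θ β₁ β₂ (ih₁ hr) (ih₂ hr)
  | orL n Γ α₁ α₂ β _ _ ih₁ ih₂ =>
    obtain ⟨D, rfl, hC⟩ := hr.plug_fml_inv (by simp)
    exact .orL n D α₁ α₂ β (ih₁ (hC.plug (.refl _))) (ih₂ (hC.plug (.refl _)))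
  | orR₁ n Γ β₁ β₂ _ ih => exact .orR₁ n Θ β₁ β₂ (ih hr)
  | orR₂ n Γ β₁ β₂ _ ih => exact .orR₂ n Θ β₁ β₂ (ih hr)
  | impL n Γ Δ α₁ α₂ β _ _ ih₁ ih₂ =>
    obtain ⟨D, Y, rfl, hC, hY⟩ := hr.plug_inv
    obtain ⟨Y₁, Y₂, rfl, hY₁, hY₂⟩ := hY.comma_inv
    obtain rfl := hY₂.eq_of_fml (by simp)
    exact .impL n D Y₁ α₁ α₂ β (ih₁ hY₁) (ih₂ (hC.plug (.refl _)))
  | impR n Γ β₁ β₂ _ ih => exact .impR n Θ β₁ β₂ (ih (.comma (.refl _) hr))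
  | diaL n Γ α' β _ ih =>
    obtain ⟨D, Y, rfl, hC, hY⟩ := hr.plug_inv
    rcases hY.fml_inv with rfl | ⟨hα, rfl⟩
    · exact .diaL n D α' β (ih (hC.plug (.refl _)))
    · obtain rfl := Fml.dia.inj hα
      exact (ih (hC.plug (.refl _))).succ
  | diaR n Γ β _ ih =>
    obtain ⟨Θ', rfl, h'⟩ := hr.circ_inv
    exact .diaR n Θ' β (ih h')
  | bdiaL n Γ α' β _ ih =>
    obtain ⟨D, rfl, hC⟩ := hr.plug_fml_inv (by simp)
    exact .bdiaL n D α' β (ih (hC.plug (.refl _)))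
  | bdiaR n Γ β _ ih =>
    obtain ⟨Θ', rfl, h'⟩ := hr.bullet_inv
    exact .bdiaR n Θ' β (ih h')
  | bboxL n Γ α' β _ ih =>
    obtain ⟨D, Y, rfl, hC, hY⟩ := hr.plug_inv
    obtain ⟨Y', rfl, hY'⟩ := hY.circ_inv
    obtain rfl := hY'.eq_of_fml (by simp)
    exact .bboxL n D α' β (ih (hC.plug (.refl _)))
  | bboxR n Γ β _ ih => exact .bboxR n Θ β (ih (.circ hr))
  | boxL n Γ α' β _ ih =>
    obtain ⟨D, Y, rfl, hC, hY⟩ := hr.plug_inv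
    obtain ⟨Y', rfl, hY'⟩ := hY.bullet_inv
    obtain rfl := hY'.eq_of_fml (by simp)
    exact .boxL n D α' β (ih (hC.plug (.refl _)))
  | boxR n Γ β _ ih => exact .boxR n Θ β (ih (.bullet hr))
  | conCirc n Γ Δ₁ Δ₂ β _ ih =>
    obtain ⟨D, Y, rfl, hC, hY⟩ := hr.plug_inv
    obtain ⟨Y', rfl, hY'⟩ := hY.circ_inv
    obtain ⟨Y₁, Y₂, rfl, h₁, h₂⟩ := hY'.comma_inv
    exact .conCirc n D Y₁ Y₂ β (ih (hC.plug (.comma (.circ h₁) (.circ h₂))))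
  | conBullet n Γ Δ₁ Δ₂ β _ ih =>
    obtain ⟨D, Y, rfl, hC, hY⟩ := hr.plug_inv
    obtain ⟨Y', rfl, hY'⟩ := hY.bullet_inv
    obtain ⟨Y₁, Y₂, rfl, h₁, h₂⟩ := hY'.comma_inv
    exact .conBullet n D Y₁ Y₂ β (ih (hC.plug (.comma (.bullet h₁) (.bullet h₂))))
  | conF => simp_all
  | conA n Γ α' β hc hα _ ih =>
    obtain ⟨D, rfl, hC⟩ := hr.plug_fml_inv (ne_dia hα)
    exact .conA n D α' β hc hα (ih (hC.plug (.refl _)))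
  | conBox n Γ α' β hc _ ih =>
    obtain ⟨D, rfl, hC⟩ := hr.plug_fml_inv (by simp)
    exact .conBox n D α' β hc (ih (hC.plug (.refl _)))
  | conBBox n Γ α' β hc _ ih =>
    obtain ⟨D, rfl, hC⟩ := hr.plug_fml_inv (by simp)
    exact .conBBox n D α' β hc (ih (hC.plug (.refl _)))
  | conImp n Γ α₁ α₂ β hc _ ih =>
    obtain ⟨D, rfl, hC⟩ := hr.plug_fml_inv (by simp)
    exact .conImp n D α₁ α₂ β hc (ih (hC.plug (.refl _)))
  | wk₁ n Γ Δ₁ Δ₂ β _ ih =>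
    obtain ⟨D, Y, rfl, hC, hY⟩ := hr.plug_inv
    obtain ⟨Y₁, Y₂, rfl, h₁, -⟩ := hY.comma_inv
    exact .wk₁ n D Y₁ Y₂ β (ih (hC.plug h₁))
  | wk₂ n Γ Δ₁ Δ₂ β _ ih =>
    obtain ⟨D, Y, rfl, hC, hY⟩ := hr.plug_inv
    obtain ⟨Y₁, Y₂, rfl, -, h₂⟩ := hY.comma_inv
    exact .wk₂ n D Y₁ Y₂ β (ih (hC.plug h₂))
  | ex n Γ Δ₁ Δ₂ β _ ih =>
    obtain ⟨D, Y, rfl, hC, hY⟩ := hr.plug_inv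
    obtain ⟨Y₂, Y₁, rfl, h₂, h₁⟩ := hY.comma_inv
    exact .ex n D Y₁ Y₂ β (ih (hC.plug (.comma h₁ h₂)))
  | dualCB n Γ Δ₁ Δ₂ β _ ih =>
    obtain ⟨D, Y, rfl, -, hY⟩ := hr.plug_inv
    obtain ⟨Y₁, Y₂', rfl, h₁, h₂'⟩ := hY.comma_inv
    obtain ⟨Y₂, rfl, h₂⟩ := h₂'.bullet_inv
    exact .dualCB n D Y₁ Y₂ β (ih (.comma (.circ h₁) h₂))
  | dualBC n Γ Δ₁ Δ₂ β _ ih =>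
    obtain ⟨D, Y, rfl, -, hY⟩ := hr.plug_inv
    obtain ⟨Y₁, Y₂', rfl, h₁, h₂'⟩ := hY.comma_inv
    obtain ⟨Y₂, rfl, h₂⟩ := h₂'.circ_inv
    exact .dualBC n D Y₁ Y₂ β (ih (.comma (.bullet h₁) h₂))
  | cut n Γ Δ α' β hc _ _ ih₁ ih₂ =>
    obtain ⟨D, Y, rfl, hC, hY⟩ := hr.plug_inv
    exact .cut n D Y α' β hc (ih₁ hY) (ih₂ (hC.plug (.refl _)))
  | mixA | mixBox | mixBBox | mixImp | cutStar => simp_all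

/-- height-preserving invertibility of (◇L) in cut-free GwIKt†. -/
theorem stmt3_diaL_invertible :
    ∀ n : ℕ, 1 ≤ n → ∀ (Γ : Ctx) (α β : Fml),
      DerH GwIKtDCF n (Γ.plug (.fml α.dia)) β →
      DerH GwIKtDCF n (Γ.plug (.circ (.fml α))) β := fun _ _ Γ _ _ h =>
  h.of_diaRepl rfl rfl rfl ((DiaReplCtx.refl Γ).plug .dia)
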